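/- arXiv:2311.15871 — 2 statements merged into one kernel-verified Lean document; each statement's English description precedes it below -/
import Mathlib

section
/- Suppose Z is independent of Y0 and of Y1, Condition S0 holds, and 0 < p(z_ℓ) < 1 for every ℓ. Let γ and γ̃ belong to Γ₀, the set of vectors (γ_1,...,γ_L) ∈ ℝ^L with Σ_ℓ γ_ℓ = 0 and Σ_ℓ γ_ℓ (1−p(z_ℓ)) = 1, and suppose for every y ∈ ℝ: P[Y ≤ y | D=0] ≤ Σ_{ℓ=1}^L γ_ℓ P[Y ≤ y, D=0 | Z=z_ℓ] and Σ_{ℓ=1}^L γ̃_ℓ P[Y ≤ y, D=0 | Z=z_ℓ] ≤ P[Y ≤ y | D=0]. Then for every y ∈ ℝ: −Σ_{ℓ=1}^L γ̃_ℓ P[Y ≤ y, D=1 | Z=z_ℓ] ≤ P[Y1 ≤ y | D=0] ≤ −Σ_{ℓ=1}^L γ_ℓ P[Y ≤ y, D=1 | Z=z_ℓ]. -/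
open MeasureTheory ProbabilityTheory Filter Set

/-- Probability of an event. -/
noncomputable def pr {Ω : Type*} [MeasurableSpace Ω] (μ : Measure Ω) (s : Set Ω) : ℝ :=
  (μ s).toReal

/-- Conditional probability `P[s | A]`. -/
noncomputable def cpr {Ω : Type*} [MeasurableSpace Ω] (μ : Measure Ω) (s A : Set Ω) : ℝ :=
  pr μ (s ∩ A) / pr μ A

/-!
Write `w ℓ = P[Z = ℓ | D = 0]`, `q ℓ = 1 - p ℓ = P[D = 0 | Z = ℓ]` and
`Fₖ ℓ = P[Yₖ ≤ · | D = 0, Z = ℓ]`. The law of total probability gives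
`P[Y ≤ · | D = 0] = ∑ w F₀` and `P[Y₁ ≤ · | D = 0] = ∑ w F₁`, while
`P[Y ≤ ·, D = 0 | Z = ℓ] = q ℓ F₀ ℓ` and, as `Z` is independent of `Y₁`,
`P[Y ≤ ·, D = 1 | Z = ℓ] = P[Y₁ ≤ ·] - q ℓ F₁ ℓ`. Since `∑ γ = 0`, the claimed bounds read
`∑ γ̃ q F₁ ≤ ∑ w F₁ ≤ ∑ γ q F₁`, and the rank conditions say the same of `F₀`. Condition S₀
carries such comparisons from `F₀` to `F₁`, and it extends from probability vectors to any two
weight vectors with equal sums: the positive and negative parts of their difference have the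
same mass, so after normalization they are probability vectors.
-/

section MixtureOrder

variable {ι : Type*} [Fintype ι]

/-- Condition S₀, with `G₀ i`, `G₁ i` standing for `P[Y₀ ≤ · | D = 0, Z = zᵢ]`,
`P[Y₁ ≤ · | D = 0, Z = zᵢ]`. -/
def PreservesMixtureOrder (G₀ G₁ : ι → ℝ → ℝ) : Prop :=
  ∀ w wt : ι → ℝ, (∀ i, 0 ≤ w i) → (∀ i, 0 ≤ wt i) → ∑ i, w i = 1 → ∑ i, wt i = 1 →
    (∀ y, ∑ i, w i * G₀ i y ≤ ∑ i, wt i * G₀ i y) →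
    ∀ y, ∑ i, w i * G₁ i y ≤ ∑ i, wt i * G₁ i y

namespace PreservesMixtureOrder

variable {G₀ G₁ : ι → ℝ → ℝ}

theorem sum_mul_le_sum_mul_of_nonneg (hG : PreservesMixtureOrder G₀ G₁) {a b : ι → ℝ}
    (ha : ∀ i, 0 ≤ a i) (hb : ∀ i, 0 ≤ b i) (hab : ∑ i, a i = ∑ i, b i)
    (h₀ : ∀ y, ∑ i, a i * G₀ i y ≤ ∑ i, b i * G₀ i y) (y : ℝ) :
    ∑ i, a i * G₁ i y ≤ ∑ i, b i * G₁ i y := by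
  rcases (Finset.sum_nonneg fun i _ => ha i).eq_or_lt with hs | hs
  · have ha0 : ∀ i, a i = 0 := fun i =>
      (Finset.sum_eq_zero_iff_of_nonneg fun i _ => ha i).1 hs.symm i (Finset.mem_univ i)
    have hb0 : ∀ i, b i = 0 := fun i =>
      (Finset.sum_eq_zero_iff_of_nonneg fun i _ => hb i).1 (hab ▸ hs.symm) i (Finset.mem_univ i)
    simp [ha0, hb0]
  · set s := ∑ i, a i
    have hscale : ∀ (c : ι → ℝ) (G : ι → ℝ), ∑ i, c i / s * G i = (∑ i, c i * G i) / s := by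
      intro c G
      simp_rw [Finset.sum_div, div_mul_eq_mul_div]
    have hG' := hG (fun i => a i / s) (fun i => b i / s) (fun i => div_nonneg (ha i) hs.le)
      (fun i => div_nonneg (hb i) hs.le) (by rw [← Finset.sum_div, div_self hs.ne'])
      (by rw [← Finset.sum_div, ← hab, div_self hs.ne'])
      (fun y => by
        rw [hscale a, hscale b]
        exact div_le_div_of_nonneg_right (h₀ y) hs.le) y
    rw [hscale a, hscale b] at hG'
    exact (div_le_div_iff_of_pos_right hs).1 hG'

theorem sum_mul_le_sum_mul (hG : PreservesMixtureOrder G₀ G₁) {u v : ι → ℝ}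
    (huv : ∑ i, u i = ∑ i, v i) (h₀ : ∀ y, ∑ i, u i * G₀ i y ≤ ∑ i, v i * G₀ i y) (y : ℝ) :
    ∑ i, u i * G₁ i y ≤ ∑ i, v i * G₁ i y := by
  have hsplit : ∀ G : ι → ℝ, ∑ i, v i * G i - ∑ i, u i * G i
      = ∑ i, (v i - u i)⁺ * G i - ∑ i, (v i - u i)⁻ * G i := by
    intro G
    simp_rw [← Finset.sum_sub_distrib, ← sub_mul, posPart_sub_negPart]
  have hmass : ∑ i, (v i - u i)⁻ = ∑ i, (v i - u i)⁺ := by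
    have hsplit₁ := hsplit fun _ => 1
    simp only [mul_one, huv, sub_self] at hsplit₁
    linarith
  have hparts := sum_mul_le_sum_mul_of_nonneg hG (fun i => negPart_nonneg _)
    (fun i => posPart_nonneg _) hmass (fun y => by linarith [h₀ y, hsplit fun i => G₀ i y]) y
  linarith [hsplit fun i => G₁ i y]

end PreservesMixtureOrder

theorem neg_sum_mul_sub_eq_of_sum_eq_zero {g : ι → ℝ} (hg : ∑ i, g i = 0) (a : ℝ) (b : ι → ℝ) :
    -∑ i, g i * (a - b i) = ∑ i, g i * b i := by
  simp [mul_sub, Finset.sum_sub_distrib, ← Finset.sum_mul, hg]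

end MixtureOrder

section ConditionalProbability

variable {Ω : Type*} [MeasurableSpace Ω] {μ : Measure Ω}

theorem pr_eq_measureReal (s : Set Ω) : pr μ s = μ.real s := rfl

variable [IsFiniteMeasure μ]

theorem pr_inter_eq_mul_cpr (s A : Set Ω) : pr μ (s ∩ A) = pr μ A * cpr μ s A := by
  rcases eq_or_ne (pr μ A) 0 with hA | hA
  · have hsA : pr μ (s ∩ A) = 0 := measureReal_mono_null inter_subset_right hA
    rw [hsA, hA, zero_mul]
  · rw [cpr, mul_div_cancel₀ _ hA]

theorem cpr_inter_eq_mul_cpr (s A B : Set Ω) : cpr μ (s ∩ A) B = cpr μ A B * cpr μ s (A ∩ B) := by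
  rw [cpr, cpr, inter_assoc, pr_inter_eq_mul_cpr, div_mul_eq_mul_div]

theorem cpr_diff (s : Set Ω) {A : Set Ω} (hA : MeasurableSet A) (B : Set Ω) :
    cpr μ (s \ A) B = cpr μ s B - cpr μ (s ∩ A) B := by
  have hsplit := measureReal_inter_add_sdiff (μ := μ) (s := s ∩ B) hA
  rw [inter_right_comm, inter_sdiff_right_comm] at hsplit
  simp only [cpr, pr_eq_measureReal, ← sub_div, ← hsplit, add_sub_cancel_left]

theorem cpr_compl {A B : Set Ω} (hA : MeasurableSet A) (hB : pr μ B ≠ 0) :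
    cpr μ Aᶜ B = 1 - cpr μ A B := by
  rw [compl_eq_univ_sdiff, cpr_diff _ hA, univ_inter, cpr, univ_inter, div_self hB]

section Partition

variable {ι : Type*} [Fintype ι] [MeasurableSpace ι] [MeasurableSingletonClass ι] {Z : Ω → ι}

theorem pr_eq_sum_pr_inter (hZ : Measurable Z) (S : Set Ω) :
    pr μ S = ∑ i, pr μ (S ∩ {ω | Z ω = i}) := by
  have hsum := sum_measureReal_preimage_singleton (μ := μ.restrict S) Finset.univ
    (fun i _ => hZ (measurableSet_singleton i))
  simp only [Finset.coe_univ, preimage_univ, measureReal_restrict_apply_univ] at hsum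
  rw [pr_eq_measureReal, ← hsum]
  refine Finset.sum_congr rfl fun i _ => ?_
  rw [measureReal_restrict_apply (hZ (measurableSet_singleton i)), inter_comm]
  rfl

theorem sum_cpr_eq_one (hZ : Measurable Z) {A : Set Ω} (hA : pr μ A ≠ 0) :
    ∑ i, cpr μ {ω | Z ω = i} A = 1 := by
  simp only [cpr, ← Finset.sum_div, inter_comm _ A, ← pr_eq_sum_pr_inter hZ, div_self hA]

theorem cpr_eq_sum_cpr_mul_cpr (hZ : Measurable Z) (S A : Set Ω) :
    cpr μ S A = ∑ i, cpr μ {ω | Z ω = i} A * cpr μ S (A ∩ {ω | Z ω = i}) := by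
  rw [cpr, pr_eq_sum_pr_inter hZ, Finset.sum_div]
  refine Finset.sum_congr rfl fun i _ => ?_
  rw [inter_assoc, pr_inter_eq_mul_cpr, mul_div_right_comm, inter_comm A]
  rfl

end Partition

end ConditionalProbability

theorem ProbabilityTheory.IndepFun.cpr_preimage_eq_pr {Ω β γ : Type*} [MeasurableSpace Ω]
    [MeasurableSpace β] [MeasurableSpace γ] {μ : Measure Ω} {Z : Ω → β} {X : Ω → γ}
    (h : IndepFun Z X μ) {s : Set β} {t : Set γ} (hs : MeasurableSet s) (ht : MeasurableSet t)
    (hZ : pr μ (Z ⁻¹' s) ≠ 0) :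
    cpr μ (X ⁻¹' t) (Z ⁻¹' s) = pr μ (X ⁻¹' t) := by
  rw [cpr, inter_comm, pr, h.measure_inter_preimage_eq_mul s t hs ht, ENNReal.toReal_mul,
    ← pr, ← pr, mul_div_cancel_left₀ _ hZ]

section PotentialOutcomes

variable {Ω : Type*} [MeasurableSpace Ω] {μ : Measure Ω} [IsFiniteMeasure μ]
  {Y₀ Y₁ Y : Ω → ℝ} {D : Ω → ℕ}

theorem cpr_observed_le_untreated_eq_sum {ι : Type*} [Fintype ι] [MeasurableSpace ι]
    [MeasurableSingletonClass ι] {Z : Ω → ι} (hY : ∀ ω, Y ω = if D ω = 1 then Y₁ ω else Y₀ ω)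
    (hZ : Measurable Z) (y : ℝ) :
    cpr μ {ω | Y ω ≤ y} {ω | D ω = 0} = ∑ i, cpr μ {ω | Z ω = i} {ω | D ω = 0} *
      cpr μ {ω | Y₀ ω ≤ y} ({ω | D ω = 0} ∩ {ω | Z ω = i}) := by
  have hset : {ω | Y ω ≤ y} ∩ {ω | D ω = 0} = {ω | Y₀ ω ≤ y} ∩ {ω | D ω = 0} := by
    ext ω
    by_cases hD : D ω = 0 <;> simp [hY, hD]
  rw [← cpr_eq_sum_cpr_mul_cpr hZ, cpr, cpr, hset]

theorem cpr_observed_le_and_untreated (hY : ∀ ω, Y ω = if D ω = 1 then Y₁ ω else Y₀ ω)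
    (y : ℝ) (B : Set Ω) :
    cpr μ {ω | Y ω ≤ y ∧ D ω = 0} B
      = cpr μ {ω | D ω = 0} B * cpr μ {ω | Y₀ ω ≤ y} ({ω | D ω = 0} ∩ B) := by
  have hset : {ω | Y ω ≤ y ∧ D ω = 0} = {ω | Y₀ ω ≤ y} ∩ {ω | D ω = 0} := by
    ext ω
    by_cases hD : D ω = 0 <;> simp [hY, hD]
  rw [hset, cpr_inter_eq_mul_cpr]

theorem cpr_observed_le_and_treated (hD01 : ∀ ω, D ω = 0 ∨ D ω = 1)
    (hY : ∀ ω, Y ω = if D ω = 1 then Y₁ ω else Y₀ ω) (hD : MeasurableSet {ω | D ω = 0})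
    (y : ℝ) (B : Set Ω) :
    cpr μ {ω | Y ω ≤ y ∧ D ω = 1} B = cpr μ {ω | Y₁ ω ≤ y} B
      - cpr μ {ω | D ω = 0} B * cpr μ {ω | Y₁ ω ≤ y} ({ω | D ω = 0} ∩ B) := by
  have hset : {ω | Y ω ≤ y ∧ D ω = 1} = {ω | Y₁ ω ≤ y} \ {ω | D ω = 0} := by
    ext ω
    rcases hD01 ω with hD | hD <;> simp [hY, hD]
  rw [hset, cpr_diff _ hD, cpr_inter_eq_mul_cpr]

end PotentialOutcomes

theorem bounds_on_counterfactual_distribution_untreated_general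
    {Ω : Type*} [MeasurableSpace Ω] (μ : Measure Ω) [IsProbabilityMeasure μ]
    (L : ℕ)
    (Y0 Y1 Y : Ω → ℝ) (D : Ω → ℕ) (Z : Ω → Fin L)
    (hmD : Measurable D) (hmZ : Measurable Z)
    (hD01 : ∀ ω, D ω = 0 ∨ D ω = 1)
    (hYobs : ∀ ω, Y ω = if D ω = 1 then Y1 ω else Y0 ω)
    (hZpos : ∀ ℓ : Fin L, 0 < pr μ {ω | Z ω = ℓ})
    (hposD0 : 0 < pr μ {ω | D ω = 0})
    (hindep1 : IndepFun Z Y1 μ)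
    (p : Fin L → ℝ) (hp : ∀ ℓ, p ℓ = cpr μ {ω | D ω = 1} {ω | Z ω = ℓ})
    -- Condition S₀
    (condS0 : ∀ w wt : Fin L → ℝ, (∀ ℓ, 0 ≤ w ℓ) → (∀ ℓ, 0 ≤ wt ℓ) →
      (∑ ℓ, w ℓ) = 1 → (∑ ℓ, wt ℓ) = 1 →
      (∀ y : ℝ, (∑ ℓ, w ℓ * cpr μ {ω | Y0 ω ≤ y} {ω | D ω = 0 ∧ Z ω = ℓ})
        ≤ ∑ ℓ, wt ℓ * cpr μ {ω | Y0 ω ≤ y} {ω | D ω = 0 ∧ Z ω = ℓ}) →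
      (∀ y : ℝ, (∑ ℓ, w ℓ * cpr μ {ω | Y1 ω ≤ y} {ω | D ω = 0 ∧ Z ω = ℓ})
        ≤ ∑ ℓ, wt ℓ * cpr μ {ω | Y1 ω ≤ y} {ω | D ω = 0 ∧ Z ω = ℓ}))
    -- γ, γ̃ ∈ Γ₀
    (γ γt : Fin L → ℝ)
    (hγ0 : (∑ ℓ, γ ℓ) = 0) (hγ1 : (∑ ℓ, γ ℓ * (1 - p ℓ)) = 1)
    (hγt0 : (∑ ℓ, γt ℓ) = 0) (hγt1 : (∑ ℓ, γt ℓ * (1 - p ℓ)) = 1)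
    -- the rank conditions
    (hUB : ∀ y : ℝ, cpr μ {ω | Y ω ≤ y} {ω | D ω = 0}
      ≤ ∑ ℓ, γ ℓ * cpr μ {ω | Y ω ≤ y ∧ D ω = 0} {ω | Z ω = ℓ})
    (hLB : ∀ y : ℝ, (∑ ℓ, γt ℓ * cpr μ {ω | Y ω ≤ y ∧ D ω = 0} {ω | Z ω = ℓ})
      ≤ cpr μ {ω | Y ω ≤ y} {ω | D ω = 0}) :
    ∀ y : ℝ,
      (-∑ ℓ, γt ℓ * cpr μ {ω | Y ω ≤ y ∧ D ω = 1} {ω | Z ω = ℓ})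
          ≤ cpr μ {ω | Y1 ω ≤ y} {ω | D ω = 0} ∧
        cpr μ {ω | Y1 ω ≤ y} {ω | D ω = 0}
          ≤ -∑ ℓ, γ ℓ * cpr μ {ω | Y ω ≤ y ∧ D ω = 1} {ω | Z ω = ℓ} := by
  have hD0 : MeasurableSet {ω | D ω = 0} := hmD (measurableSet_singleton 0)
  have hq : ∀ ℓ, 1 - p ℓ = cpr μ {ω | D ω = 0} {ω | Z ω = ℓ} := fun ℓ => by
    have hD1 : {ω | D ω = 1} = {ω | D ω = 0}ᶜ := by
      ext ω
      rcases hD01 ω with hD | hD <;> simp [hD]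
    rw [hp ℓ, hD1, cpr_compl hD0 (hZpos ℓ).ne', sub_sub_cancel]
  have hY1 : ∀ y ℓ, cpr μ {ω | Y1 ω ≤ y} {ω | Z ω = ℓ} = pr μ {ω | Y1 ω ≤ y} := fun y ℓ =>
    hindep1.cpr_preimage_eq_pr (measurableSet_singleton ℓ) measurableSet_Iic (hZpos ℓ).ne'
  have hw := sum_cpr_eq_one (μ := μ) hmZ hposD0.ne'
  simp_rw [hq] at hγ1 hγt1
  simp_rw [cpr_observed_le_untreated_eq_sum hYobs hmZ, cpr_observed_le_and_untreated hYobs,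
    ← mul_assoc] at hUB hLB
  intro y
  simp_rw [cpr_observed_le_and_treated hD01 hYobs hD0, hY1,
    neg_sum_mul_sub_eq_of_sum_eq_zero hγ0, neg_sum_mul_sub_eq_of_sum_eq_zero hγt0,
    cpr_eq_sum_cpr_mul_cpr hmZ {ω | Y1 ω ≤ y} {ω | D ω = 0}, ← mul_assoc]
  exact ⟨PreservesMixtureOrder.sum_mul_le_sum_mul condS0 (by rw [hγt1, hw]) hLB y,
    PreservesMixtureOrder.sum_mul_le_sum_mul condS0 (by rw [hw, hγ1]) hUB y⟩

/-- Theorem 2 (bounds on `P[Y₁ ≤ y | D = 0]` under Condition S₀). -/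
theorem bounds_on_counterfactual_distribution_untreated
    {Ω : Type*} [MeasurableSpace Ω] (μ : Measure Ω) [IsProbabilityMeasure μ]
    (L : ℕ) [NeZero L]
    (Y0 Y1 Y : Ω → ℝ) (D : Ω → ℕ) (Z : Ω → Fin L)
    (hmY0 : Measurable Y0) (hmY1 : Measurable Y1) (hmD : Measurable D) (hmZ : Measurable Z)
    (hD01 : ∀ ω, D ω = 0 ∨ D ω = 1)
    (hYobs : ∀ ω, Y ω = if D ω = 1 then Y1 ω else Y0 ω)
    (hZpos : ∀ ℓ : Fin L, 0 < pr μ {ω | Z ω = ℓ})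
    (hposD0 : 0 < pr μ {ω | D ω = 0})
    (hposD0Z : ∀ ℓ : Fin L, 0 < pr μ {ω | D ω = 0 ∧ Z ω = ℓ})
    (hindep0 : IndepFun Z Y0 μ) (hindep1 : IndepFun Z Y1 μ)
    (p : Fin L → ℝ) (hp : ∀ ℓ, p ℓ = cpr μ {ω | D ω = 1} {ω | Z ω = ℓ})
    (hp01 : ∀ ℓ, 0 < p ℓ ∧ p ℓ < 1)
    -- Condition S₀
    (condS0 : ∀ w wt : Fin L → ℝ, (∀ ℓ, 0 ≤ w ℓ) → (∀ ℓ, 0 ≤ wt ℓ) →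
      (∑ ℓ, w ℓ) = 1 → (∑ ℓ, wt ℓ) = 1 →
      (∀ y : ℝ, (∑ ℓ, w ℓ * cpr μ {ω | Y0 ω ≤ y} {ω | D ω = 0 ∧ Z ω = ℓ})
        ≤ ∑ ℓ, wt ℓ * cpr μ {ω | Y0 ω ≤ y} {ω | D ω = 0 ∧ Z ω = ℓ}) →
      (∀ y : ℝ, (∑ ℓ, w ℓ * cpr μ {ω | Y1 ω ≤ y} {ω | D ω = 0 ∧ Z ω = ℓ})
        ≤ ∑ ℓ, wt ℓ * cpr μ {ω | Y1 ω ≤ y} {ω | D ω = 0 ∧ Z ω = ℓ}))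
    -- γ, γ̃ ∈ Γ₀
    (γ γt : Fin L → ℝ)
    (hγ0 : (∑ ℓ, γ ℓ) = 0) (hγ1 : (∑ ℓ, γ ℓ * (1 - p ℓ)) = 1)
    (hγt0 : (∑ ℓ, γt ℓ) = 0) (hγt1 : (∑ ℓ, γt ℓ * (1 - p ℓ)) = 1)
    -- the rank conditions
    (hUB : ∀ y : ℝ, cpr μ {ω | Y ω ≤ y} {ω | D ω = 0}
      ≤ ∑ ℓ, γ ℓ * cpr μ {ω | Y ω ≤ y ∧ D ω = 0} {ω | Z ω = ℓ})
    (hLB : ∀ y : ℝ, (∑ ℓ, γt ℓ * cpr μ {ω | Y ω ≤ y ∧ D ω = 0} {ω | Z ω = ℓ})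
      ≤ cpr μ {ω | Y ω ≤ y} {ω | D ω = 0}) :
    ∀ y : ℝ,
      (-∑ ℓ, γt ℓ * cpr μ {ω | Y ω ≤ y ∧ D ω = 1} {ω | Z ω = ℓ})
          ≤ cpr μ {ω | Y1 ω ≤ y} {ω | D ω = 0} ∧
        cpr μ {ω | Y1 ω ≤ y} {ω | D ω = 0}
          ≤ -∑ ℓ, γ ℓ * cpr μ {ω | Y ω ≤ y ∧ D ω = 1} {ω | Z ω = ℓ} :=
  bounds_on_counterfactual_distribution_untreated_general μ L Y0 Y1 Y D Z hmD hmZ hD01 hYobs hZpos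
    hposD0 hindep1 p hp condS0 γ γt hγ0 hγ1 hγt0 hγt1 hUB hLB
end

section
/- Suppose Y = q(D, U_D) with q(d, ·) continuous and strictly increasing, U_D = D·U1 + (1−D)·U0, and D = h(Z, η), and suppose rank similarity holds: the conditional distribution of U0 given (η, Z) equals the conditional distribution of U1 given (η, Z). Then Condition S* holds. -/
/-!
Since `q d` is continuous and increasing, each event `{Y_d ≤ y}` is empty, everything, or
`{U_d ≤ a}` for some `a`. Summing rank similarity over the values of the instrument, the events
`{U₀ ≤ a}` and `{U₁ ≤ a} = {Y₁ ≤ q 1 a}` have the same joint law with `η`. Hence every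
section `F₀ y` of the conditional CDF is a.e. `0`, `1`, or some section `F₁ y'`, so the weighted
comparisons defining S* pass from `F₁` to `F₀`, and symmetrically back.
-/

open MeasureTheory ProbabilityTheory Filter Set

theorem IsLowerSet.eq_empty_or_univ_or_Iic_of_isClosed {α : Type*}
    [ConditionallyCompleteLinearOrder α] [TopologicalSpace α] [OrderTopology α]
    {s : Set α} (hs : IsLowerSet s) (hc : IsClosed s) :
    s = ∅ ∨ s = univ ∨ ∃ a, s = Iic a := by
  rcases s.eq_empty_or_nonempty with rfl | hne
  · exact Or.inl rfl
  by_cases hbdd : BddAbove s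
  · refine Or.inr <| Or.inr ⟨sSup s, Set.ext fun x => ⟨fun hx => le_csSup hbdd hx, fun hx => ?_⟩⟩
    exact hs hx (hc.csSup_mem hne hbdd)
  · refine Or.inr <| Or.inl <| eq_univ_of_forall fun x => ?_
    obtain ⟨y, hy, hxy⟩ := not_bddAbove_iff.mp hbdd x
    exact hs hxy.le hy

theorem Monotone.preimage_Iic_eq_empty_or_univ_or_Iic {α β : Type*}
    [ConditionallyCompleteLinearOrder α] [TopologicalSpace α] [OrderTopology α]
    [Preorder β] [TopologicalSpace β] [ClosedIicTopology β]
    {f : α → β} (hf : Monotone f) (hc : Continuous f) (b : β) :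
    f ⁻¹' Iic b = ∅ ∨ f ⁻¹' Iic b = univ ∨ ∃ a, f ⁻¹' Iic b = Iic a :=
  IsLowerSet.eq_empty_or_univ_or_Iic_of_isClosed (fun _ _ hxy hy => (hf hxy).trans hy)
    (isClosed_Iic.preimage hc)

theorem ae_eq_of_forall_setIntegral_eq_of_stronglyMeasurable {α E : Type*} [MeasurableSpace α]
    [NormedAddCommGroup E] [NormedSpace ℝ E] [CompleteSpace E]
    {μ : Measure α} [IsFiniteMeasure μ] {f g : α → E}
    (hf : StronglyMeasurable f) (hg : StronglyMeasurable g)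
    (hfg : ∀ s, MeasurableSet s → ∫ x in s, f x ∂μ = ∫ x in s, g x ∂μ) : f =ᵐ[μ] g := by
  -- no integrability is assumed: compare `f` and `g` on the sets where both are bounded
  let S : ℕ → Set α := fun n => {x | ‖f x‖ ≤ n ∧ ‖g x‖ ≤ n}
  have hS : ∀ n, MeasurableSet (S n) := fun n =>
    (hf.norm.measurable measurableSet_Iic).inter (hg.norm.measurable measurableSet_Iic)
  have hcover : ⋃ n, S n = univ := eq_univ_of_forall fun x => by
    obtain ⟨n, hn⟩ := exists_nat_ge (max ‖f x‖ ‖g x‖)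
    exact mem_iUnion.mpr ⟨n, (le_max_left _ _).trans hn, (le_max_right _ _).trans hn⟩
  have hbounded : ∀ {F : α → E}, StronglyMeasurable F → ∀ n, (∀ x ∈ S n, ‖F x‖ ≤ n) →
      Integrable F (μ.restrict (S n)) := fun hF n hFn =>
    Integrable.of_bound hF.aestronglyMeasurable n ((ae_restrict_iff' (hS n)).mpr
      (Eventually.of_forall hFn))
  rw [EventuallyEq, ← Measure.restrict_univ (μ := μ), ← hcover, ae_restrict_iUnion_iff]
  intro n
  refine ae_eq_of_forall_setIntegral_eq_of_sigmaFinite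
    (fun s _ _ => (hbounded hf n fun x hx => hx.1).integrableOn)
    (fun s _ _ => (hbounded hg n fun x hx => hx.2).integrableOn) fun s hs _ => ?_
  rw [Measure.restrict_restrict hs]
  exact hfg _ (hs.inter (hS n))

theorem measure_eq_of_forall_inter_preimage_singleton_eq {Ω ι : Type*} [MeasurableSpace Ω]
    [Fintype ι] {μ : Measure Ω} {Z : Ω → ι} (hZ : ∀ i, MeasurableSet (Z ⁻¹' {i}))
    {A B : Set Ω} (h : ∀ i, μ (A ∩ Z ⁻¹' {i}) = μ (B ∩ Z ⁻¹' {i})) : μ A = μ B := by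
  have hsum : ∀ C : Set Ω, μ C = ∑ i, μ (C ∩ Z ⁻¹' {i}) := fun C => by
    simp_rw [inter_comm C, ← Measure.restrict_apply (hZ _)]
    rw [sum_measure_preimage_singleton _ fun i _ => hZ i]
    simp
  rw [hsum A, hsum B]
  exact Finset.sum_congr rfl fun i _ => h i

def SectionsAmong {T : Type*} [MeasurableSpace T] (ν : Measure T) (G F : ℝ → T → ℝ) : Prop :=
  ∀ y, G y =ᵐ[ν] 0 ∨ G y =ᵐ[ν] 1 ∨ ∃ y', G y =ᵐ[ν] F y'

theorem SectionsAmong.integral_mul_le {T : Type*} [MeasurableSpace T] {ν : Measure T}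
    {G F : ℝ → T → ℝ} (hGF : SectionsAmong ν G F) {w w' : T → ℝ}
    (hw : ∫ t, w t ∂ν ≤ ∫ t, w' t ∂ν)
    (hF : ∀ y, ∫ t, w t * F y t ∂ν ≤ ∫ t, w' t * F y t ∂ν) (y : ℝ) :
    ∫ t, w t * G y t ∂ν ≤ ∫ t, w' t * G y t ∂ν := by
  have hcongr : ∀ {g : T → ℝ} (v : T → ℝ), G y =ᵐ[ν] g →
      ∫ t, v t * G y t ∂ν = ∫ t, v t * g t ∂ν := fun v hg =>
    integral_congr_ae (EventuallyEq.rfl.mul hg)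
  rcases hGF y with h | h | ⟨y', h⟩
  · simp [hcongr w h, hcongr w' h]
  · simpa [hcongr w h, hcongr w' h] using hw
  · rw [hcongr w h, hcongr w' h]
    exact hF y'

section RankSimilarity

variable {Ω T : Type*} [MeasurableSpace Ω] [MeasurableSpace T] {μ : Measure Ω} {η : Ω → T}
  {A B : Ω → ℝ} {qA qB : ℝ → ℝ}

theorem measure_preimage_Iic_inter_trichotomy_of_rank_eq
    (hqA : StrictMono qA) (hqB : Monotone qB) (hqB_cont : Continuous qB)
    (hAB : ∀ u s, MeasurableSet s → μ (A ⁻¹' Iic u ∩ η ⁻¹' s) = μ (B ⁻¹' Iic u ∩ η ⁻¹' s))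
    (y : ℝ) :
    (∀ s, μ ((qB ∘ B) ⁻¹' Iic y ∩ η ⁻¹' s) = 0) ∨
      (∀ s, μ ((qB ∘ B) ⁻¹' Iic y ∩ η ⁻¹' s) = μ (η ⁻¹' s)) ∨
      ∃ y', ∀ s, MeasurableSet s →
        μ ((qB ∘ B) ⁻¹' Iic y ∩ η ⁻¹' s) = μ ((qA ∘ A) ⁻¹' Iic y' ∩ η ⁻¹' s) := by
  rw [preimage_comp]
  rcases hqB.preimage_Iic_eq_empty_or_univ_or_Iic hqB_cont y with h | h | ⟨a, h⟩ <;> rw [h]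
  · simp
  · simp
  · have hA : qA ⁻¹' Iic (qA a) = Iic a := Set.ext fun u => hqA.le_iff_le
    exact Or.inr <| Or.inr ⟨qA a, fun s hs => by rw [preimage_comp, hA, hAB a s hs]⟩

theorem sectionsAmong_of_rank_eq [IsFiniteMeasure μ] (hη : Measurable η)
    (hqA : StrictMono qA) (hqB : Monotone qB) (hqB_cont : Continuous qB)
    (hAB : ∀ u s, MeasurableSet s → μ (A ⁻¹' Iic u ∩ η ⁻¹' s) = μ (B ⁻¹' Iic u ∩ η ⁻¹' s))
    {FA FB : ℝ → T → ℝ} (hFA_meas : ∀ y, Measurable (FA y)) (hFB_meas : ∀ y, Measurable (FB y))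
    (hFA : ∀ y s, MeasurableSet s →
      pr μ ((qA ∘ A) ⁻¹' Iic y ∩ η ⁻¹' s) = ∫ t in s, FA y t ∂μ.map η)
    (hFB : ∀ y s, MeasurableSet s →
      pr μ ((qB ∘ B) ⁻¹' Iic y ∩ η ⁻¹' s) = ∫ t in s, FB y t ∂μ.map η) :
    SectionsAmong (μ.map η) FB FA := by
  intro y
  have hae : ∀ {g : T → ℝ}, Measurable g → (∀ s, MeasurableSet s →
      pr μ ((qB ∘ B) ⁻¹' Iic y ∩ η ⁻¹' s) = ∫ t in s, g t ∂μ.map η) → FB y =ᵐ[μ.map η] g :=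
    fun hg h => ae_eq_of_forall_setIntegral_eq_of_stronglyMeasurable
      (hFB_meas y).stronglyMeasurable hg.stronglyMeasurable fun s hs => (hFB y s hs).symm.trans (h s hs)
  rcases measure_preimage_Iic_inter_trichotomy_of_rank_eq hqA hqB hqB_cont hAB y
    with h | h | ⟨y', h⟩
  · exact Or.inl <| hae measurable_const fun s _ => by simp [pr, h]
  · exact Or.inr <| Or.inl <| hae measurable_const fun s hs => by
      simp [pr, h, Measure.map_apply hη hs, measureReal_def]
  · exact Or.inr <| Or.inr ⟨y', hae (hFA_meas y') fun s hs => by rw [pr, h s hs]; exact hFA y' s hs⟩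

end RankSimilarity

/-- Rank similarity is encoded by equality
of the joint probabilities `P[U₀ ≤ u, η ∈ s, Z = z] = P[U₁ ≤ u, η ∈ s, Z = z]`, and
`F_d y t = P[Y_d ≤ y | η = t]` is a conditional CDF of `Y_d = q(d, U_d)` given `η`
with respect to the type distribution `ν = law(η)`. -/
theorem rank_similarity_implies_condSstar_general
    {Ω : Type*} [MeasurableSpace Ω] (μ : Measure Ω) [IsProbabilityMeasure μ]
    {T : Type*} [MeasurableSpace T]
    (L : ℕ)
    (U0 U1 : Ω → ℝ) (η : Ω → T) (Z : Ω → Fin L)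
    (q : ℕ → ℝ → ℝ) (Y0 Y1 : Ω → ℝ)
    (hmη : Measurable η) (hmZ : Measurable Z)
    -- outcome equation with q(d,·) continuous and strictly increasing, selection D = h(Z, η)
    (hq : ∀ d, Continuous (q d) ∧ StrictMono (q d))
    (hY0 : ∀ ω, Y0 ω = q 0 (U0 ω)) (hY1 : ∀ ω, Y1 ω = q 1 (U1 ω))
    -- rank similarity: U₀ | (η, Z)  =ᵈ  U₁ | (η, Z)
    (hranksim : ∀ (u : ℝ) (s : Set T), MeasurableSet s → ∀ ℓ : Fin L,
      pr μ {ω | U0 ω ≤ u ∧ η ω ∈ s ∧ Z ω = ℓ}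
        = pr μ {ω | U1 ω ≤ u ∧ η ω ∈ s ∧ Z ω = ℓ})
    -- the type distribution and the conditional CDFs of Y₀, Y₁ given η
    (ν : Measure T) (hν : ν = μ.map η)
    (F0 F1 : ℝ → T → ℝ)
    (hF0meas : ∀ y, Measurable (F0 y)) (hF1meas : ∀ y, Measurable (F1 y))
    (hF0 : ∀ (y : ℝ) (s : Set T), MeasurableSet s →
      pr μ {ω | Y0 ω ≤ y ∧ η ω ∈ s} = ∫ t in s, F0 y t ∂ν)
    (hF1 : ∀ (y : ℝ) (s : Set T), MeasurableSet s →
      pr μ {ω | Y1 ω ≤ y ∧ η ω ∈ s} = ∫ t in s, F1 y t ∂ν) :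
    -- Condition S*
    ∀ w wt : T → ℝ, Measurable w → Measurable wt →
      (∀ t, 0 ≤ w t) → (∀ t, 0 ≤ wt t) →
      (∫ t, w t ∂ν) = 1 → (∫ t, wt t ∂ν) = 1 →
      ((∀ y : ℝ, (∫ t, w t * F1 y t ∂ν) ≤ ∫ t, wt t * F1 y t ∂ν) ↔
        (∀ y : ℝ, (∫ t, w t * F0 y t ∂ν) ≤ ∫ t, wt t * F0 y t ∂ν)) := by
  intro w wt _ _ _ _ hw hwt
  subst hν
  obtain rfl : Y0 = q 0 ∘ U0 := funext hY0
  obtain rfl : Y1 = q 1 ∘ U1 := funext hY1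
  have hrank : ∀ u s, MeasurableSet s →
      μ (U0 ⁻¹' Iic u ∩ η ⁻¹' s) = μ (U1 ⁻¹' Iic u ∩ η ⁻¹' s) := fun u s hs =>
    measure_eq_of_forall_inter_preimage_singleton_eq (fun ℓ => hmZ (measurableSet_singleton ℓ))
      fun ℓ => by
        rw [inter_assoc, inter_assoc]
        exact (ENNReal.toReal_eq_toReal_iff' (measure_ne_top _ _) (measure_ne_top _ _)).mp
          (hranksim u s hs ℓ)
  have hF0_among_F1 := sectionsAmong_of_rank_eq hmη (hq 1).2 (hq 0).2.monotone (hq 0).1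
    (fun u s hs => (hrank u s hs).symm) hF1meas hF0meas hF1 hF0
  have hF1_among_F0 := sectionsAmong_of_rank_eq hmη (hq 0).2 (hq 1).2.monotone (hq 1).1
    hrank hF0meas hF1meas hF0 hF1
  have hw_le : ∫ t, w t ∂μ.map η ≤ ∫ t, wt t ∂μ.map η := (hw.trans hwt.symm).le
  exact ⟨hF0_among_F1.integral_mul_le hw_le, hF1_among_F0.integral_mul_le hw_le⟩

/-- Theorem 4: rank similarity (the conditional distribution of U₀ given (η, Z) equals
that of U₁ given (η, Z)) implies Condition S*.  Rank similarity is encoded by equality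
of the joint probabilities `P[U₀ ≤ u, η ∈ s, Z = z] = P[U₁ ≤ u, η ∈ s, Z = z]`, and
`F_d y t = P[Y_d ≤ y | η = t]` is a conditional CDF of `Y_d = q(d, U_d)` given `η`
with respect to the type distribution `ν = law(η)`. -/
theorem rank_similarity_implies_condSstar
    {Ω : Type*} [MeasurableSpace Ω] (μ : Measure Ω) [IsProbabilityMeasure μ]
    {T : Type*} [MeasurableSpace T]
    (L : ℕ) [NeZero L]
    (U0 U1 : Ω → ℝ) (η : Ω → T) (Z : Ω → Fin L)
    (q : ℕ → ℝ → ℝ) (h : Fin L → T → ℕ) (D : Ω → ℕ) (Y0 Y1 Y : Ω → ℝ)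
    (hmU0 : Measurable U0) (hmU1 : Measurable U1) (hmη : Measurable η) (hmZ : Measurable Z)
    -- outcome equation with q(d,·) continuous and strictly increasing, selection D = h(Z, η)
    (hq : ∀ d, Continuous (q d) ∧ StrictMono (q d))
    (hD : ∀ ω, D ω = h (Z ω) (η ω))
    (hY0 : ∀ ω, Y0 ω = q 0 (U0 ω)) (hY1 : ∀ ω, Y1 ω = q 1 (U1 ω))
    (hYobs : ∀ ω, Y ω = if D ω = 1 then Y1 ω else Y0 ω)
    -- rank similarity: U₀ | (η, Z)  =ᵈ  U₁ | (η, Z)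
    (hranksim : ∀ (u : ℝ) (s : Set T), MeasurableSet s → ∀ ℓ : Fin L,
      pr μ {ω | U0 ω ≤ u ∧ η ω ∈ s ∧ Z ω = ℓ}
        = pr μ {ω | U1 ω ≤ u ∧ η ω ∈ s ∧ Z ω = ℓ})
    -- the type distribution and the conditional CDFs of Y₀, Y₁ given η
    (ν : Measure T) (hν : ν = μ.map η)
    (F0 F1 : ℝ → T → ℝ)
    (hF0meas : ∀ y, Measurable (F0 y)) (hF1meas : ∀ y, Measurable (F1 y))
    (hF0 : ∀ (y : ℝ) (s : Set T), MeasurableSet s →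
      pr μ {ω | Y0 ω ≤ y ∧ η ω ∈ s} = ∫ t in s, F0 y t ∂ν)
    (hF1 : ∀ (y : ℝ) (s : Set T), MeasurableSet s →
      pr μ {ω | Y1 ω ≤ y ∧ η ω ∈ s} = ∫ t in s, F1 y t ∂ν) :
    -- Condition S*
    ∀ w wt : T → ℝ, Measurable w → Measurable wt →
      (∀ t, 0 ≤ w t) → (∀ t, 0 ≤ wt t) →
      (∫ t, w t ∂ν) = 1 → (∫ t, wt t ∂ν) = 1 →
      ((∀ y : ℝ, (∫ t, w t * F1 y t ∂ν) ≤ ∫ t, wt t * F1 y t ∂ν) ↔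
        (∀ y : ℝ, (∫ t, w t * F0 y t ∂ν) ≤ ∫ t, wt t * F0 y t ∂ν)) :=
  rank_similarity_implies_condSstar_general μ L U0 U1 η Z q Y0 Y1 hmη hmZ hq hY0 hY1 hranksim ν hν
    F0 F1 hF0meas hF1meas hF0 hF1
end
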